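/- arXiv:2201.07510 — 2 statements merged into one kernel-verified Lean document; each statement's English description precedes it below -/
import Mathlib

section
/- Let c/d be an irreducible fraction with 0 < c/d < 1 and c/d ≠ 1/2, and let n be a positive integer. If (A,B) is a c/d-cross-intersecting pair of families of subsets of {1,...,n} with |A|·|B| = 2^n, then A = 2^{[n]} (all subsets of [n]) and B = {∅} or B = ∅ (B contains no nonempty set). -/
/-!
Identify sets with their characteristic vectors in `ℚ^n`. If every `a ∈ A` meets each `b ∈ B` in
the same number of points, the differences of members of `A` are orthogonal to the members of `B`.
A family of cube vertices whose differences span a space of dimension `k` has at most `2 ^ k`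
members: two members differ in some coordinate `i`, and each half of the family split by `i` has
its differences in the smaller space cut out by `x i = 0`. Hence `|A| |B| ≤ 2 ^ n`.

In a pair attaining this bound `|A|` is `2 ^ k` for `k` the dimension of its differences. No
coordinate `i` is constant on `A`, since otherwise `{i}` could be added to `B`, and `{i} ∈ B`
is impossible for `0 < c < d`; so every coordinate splits `A` into two halves of size `2 ^ (k - 1)`.
Double counting `∑_{a ∈ A} |a ∩ b|` then gives `2 |a ∩ b| = |b|`, i.e. `c / d = 1 / 2` unless
`b = ∅`.
-/

open Finset Module Matrix

section CharVec

variable {ι : Type*} [DecidableEq ι]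

def charVec (K : Type*) [Zero K] [One K] (s : Finset ι) : ι → K := fun i => if i ∈ s then 1 else 0

@[simp]
lemma charVec_apply {K : Type*} [Zero K] [One K] (s : Finset ι) (i : ι) :
    charVec K s i = if i ∈ s then 1 else 0 := rfl

lemma charVec_dotProduct_charVec [Fintype ι] {K : Type*} [NonAssocSemiring K] (s t : Finset ι) :
    charVec K s ⬝ᵥ charVec K t = #(s ∩ t) := by
  simp only [dotProduct, charVec_apply, mul_ite, mul_one, mul_zero, ← ite_and, ← mem_inter]
  rw [sum_boole, inter_comm, ← filter_mem_eq_inter, filter_univ_mem]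

def diffSpan (K : Type*) [Ring K] (S : Finset (Finset ι)) : Submodule K (ι → K) :=
  Submodule.span K {v | ∃ s ∈ S, ∃ t ∈ S, charVec K s - charVec K t = v}

lemma charVec_sub_mem_diffSpan {K : Type*} [Ring K] {S : Finset (Finset ι)} {s t : Finset ι}
    (hs : s ∈ S) (ht : t ∈ S) : charVec K s - charVec K t ∈ diffSpan K S :=
  Submodule.subset_span ⟨s, hs, t, ht, rfl⟩

variable {K : Type*} [Field K] {S S' : Finset (Finset ι)} {s t : Finset ι} {i : ι}

lemma finrank_diffSpan_lt [Fintype ι] (hS' : S' ⊆ S)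
    (hconst : ∀ u ∈ S', ∀ v ∈ S', (i ∈ u ↔ i ∈ v))
    (hs : s ∈ S) (ht : t ∈ S) (his : i ∈ s) (hit : i ∉ t) :
    finrank K (diffSpan K S') < finrank K (diffSpan K S) := by
  set W := diffSpan K S ⊓ LinearMap.ker (LinearMap.proj i : (ι → K) →ₗ[K] K)
  have hle : diffSpan K S' ≤ W := by
    refine Submodule.span_le.2 ?_
    rintro _ ⟨u, hu, v, hv, rfl⟩
    refine ⟨charVec_sub_mem_diffSpan (hS' hu) (hS' hv), ?_⟩
    simp [hconst u hu v hv]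
  have hlt : W < diffSpan K S := by
    refine inf_lt_left.2 fun h => ?_
    have := h (charVec_sub_mem_diffSpan (K := K) hs ht)
    simp [his, hit] at this
  exact (Submodule.finrank_mono hle).trans_lt (Submodule.finrank_lt_finrank_of_lt hlt)

lemma card_le_two_pow_finrank_diffSpan [Fintype ι] (S : Finset (Finset ι)) :
    #S ≤ 2 ^ finrank K (diffSpan K S) := by
  induction hk : finrank K (diffSpan K S) using Nat.strong_induction_on generalizing S with
  | _ k ih =>
  rcases le_or_gt #S 1 with hS | hS
  · exact hS.trans (Nat.one_le_two_pow)
  obtain ⟨s, hs, t, ht, i, his, hit⟩ : ∃ s ∈ S, ∃ t ∈ S, ∃ i, i ∈ s ∧ i ∉ t := by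
    obtain ⟨s, hs, t, ht, hst⟩ := one_lt_card.1 hS
    by_cases h : s ⊆ t
    · obtain ⟨i, hit, his⟩ := not_subset.1 fun h' => hst (subset_antisymm h h')
      exact ⟨t, ht, s, hs, i, hit, his⟩
    · obtain ⟨i, his, hit⟩ := not_subset.1 h
      exact ⟨s, hs, t, ht, i, his, hit⟩
  have half : ∀ S' ⊆ S, (∀ u ∈ S', ∀ v ∈ S', (i ∈ u ↔ i ∈ v)) → 2 * #S' ≤ 2 ^ k := by
    intro S' hS' hconst
    have hlt := hk ▸ finrank_diffSpan_lt (K := K) hS' hconst hs ht his hit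
    calc 2 * #S' ≤ 2 * 2 ^ finrank K (diffSpan K S') := by
          gcongr; exact ih _ hlt S' rfl
      _ ≤ 2 ^ k := by rw [← pow_succ']; exact Nat.pow_le_pow_right two_pos hlt
  have h₁ := half {u ∈ S | i ∈ u} (filter_subset _ _) fun u hu v hv =>
    iff_of_true (mem_filter.1 hu).2 (mem_filter.1 hv).2
  have h₀ := half {u ∈ S | i ∉ u} (filter_subset _ _) fun u hu v hv =>
    iff_of_false (mem_filter.1 hu).2 (mem_filter.1 hv).2
  have := card_filter_add_card_filter_not (s := S) (fun u => i ∈ u)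
  omega

lemma two_mul_card_le_two_pow_finrank_diffSpan [Fintype ι] (hS' : S' ⊆ S)
    (hconst : ∀ u ∈ S', ∀ v ∈ S', (i ∈ u ↔ i ∈ v))
    (hs : s ∈ S) (ht : t ∈ S) (his : i ∈ s) (hit : i ∉ t) :
    2 * #S' ≤ 2 ^ finrank K (diffSpan K S) := by
  have hlt := finrank_diffSpan_lt (K := K) hS' hconst hs ht his hit
  calc 2 * #S' ≤ 2 * 2 ^ finrank K (diffSpan K S') := by
        gcongr; exact card_le_two_pow_finrank_diffSpan S'
    _ ≤ 2 ^ finrank K (diffSpan K S) := by rw [← pow_succ']; exact Nat.pow_le_pow_right two_pos hlt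

lemma dotProduct_eq_zero_of_mem_diffSpan [Fintype ι] {A : Finset (Finset ι)} {u w : ι → K}
    (h : ∀ a ∈ A, ∀ a' ∈ A, u ⬝ᵥ charVec K a = u ⬝ᵥ charVec K a') (hw : w ∈ diffSpan K A) :
    u ⬝ᵥ w = 0 := by
  suffices diffSpan K A ≤ LinearMap.ker (dotProductEquiv K ι u) from this hw
  refine Submodule.span_le.2 ?_
  rintro _ ⟨a, ha, a', ha', rfl⟩
  simp [dotProduct_sub, h a ha a' ha']

lemma finrank_add_finrank_le_of_dotProduct_eq_zero [Fintype ι] {W U : Submodule K (ι → K)}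
    (h : ∀ w ∈ W, ∀ u ∈ U, w ⬝ᵥ u = 0) : finrank K W + finrank K U ≤ Fintype.card ι := by
  have hU : U.map (dotProductEquiv K ι).toLinearMap ≤ W.dualAnnihilator := by
    rintro _ ⟨u, hu, rfl⟩
    rw [Submodule.mem_dualAnnihilator]
    intro w hw
    simp [dotProduct_comm u, h w hw u hu]
  have hmono := Submodule.finrank_mono hU
  rw [LinearEquiv.finrank_map_eq] at hmono
  have := Subspace.finrank_add_finrank_dualAnnihilator_eq W
  rw [finrank_fintype_fun_eq_card] at this
  omega

end CharVec

section CrossIntersecting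

variable {ι : Type*} [Fintype ι] [DecidableEq ι] {A B : Finset (Finset ι)}

lemma two_pow_finrank_diffSpan_mul_card_le
    (hAB : ∀ b ∈ B, ∀ a ∈ A, ∀ a' ∈ A, #(a ∩ b) = #(a' ∩ b)) :
    2 ^ finrank ℚ (diffSpan ℚ A) * #B ≤ 2 ^ Fintype.card ι := by
  have hB : ∀ b ∈ B, ∀ w ∈ diffSpan ℚ A, charVec ℚ b ⬝ᵥ w = 0 := fun b hb w hw =>
    dotProduct_eq_zero_of_mem_diffSpan (fun a ha a' ha' => by
      simp only [dotProduct_comm (charVec ℚ b), charVec_dotProduct_charVec, hAB b hb a ha a' ha'])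
      hw
  have horth : ∀ w ∈ diffSpan ℚ A, ∀ u ∈ diffSpan ℚ B, w ⬝ᵥ u = 0 := fun w hw u hu =>
    dotProduct_eq_zero_of_mem_diffSpan (fun b hb b' hb' => by
      rw [dotProduct_comm, hB b hb w hw, dotProduct_comm, hB b' hb' w hw]) hu
  calc 2 ^ finrank ℚ (diffSpan ℚ A) * #B
      ≤ 2 ^ finrank ℚ (diffSpan ℚ A) * 2 ^ finrank ℚ (diffSpan ℚ B) := by
        gcongr; exact card_le_two_pow_finrank_diffSpan B
    _ ≤ 2 ^ Fintype.card ι := by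
        rw [← pow_add]
        exact Nat.pow_le_pow_right two_pos (finrank_add_finrank_le_of_dotProduct_eq_zero horth)

lemma card_mul_card_le_two_pow (hAB : ∀ b ∈ B, ∀ a ∈ A, ∀ a' ∈ A, #(a ∩ b) = #(a' ∩ b)) :
    #A * #B ≤ 2 ^ Fintype.card ι :=
  le_trans (Nat.mul_le_mul_right _ (card_le_two_pow_finrank_diffSpan A))
    (two_pow_finrank_diffSpan_mul_card_le hAB)

lemma singleton_mem_of_card_mul_card_eq (hAB : ∀ b ∈ B, ∀ a ∈ A, ∀ a' ∈ A, #(a ∩ b) = #(a' ∩ b))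
    (hmax : #A * #B = 2 ^ Fintype.card ι) (hA : A.Nonempty) {i : ι}
    (hi : ∀ a ∈ A, ∀ a' ∈ A, (i ∈ a ↔ i ∈ a')) : {i} ∈ B := by
  by_contra hiB
  have hbound := card_mul_card_le_two_pow (B := insert {i} B) (A := A) <| by
    intro b hb a ha a' ha'
    rcases mem_insert.1 hb with rfl | hb
    · by_cases hia : i ∈ a
      · rw [inter_singleton_of_mem hia, inter_singleton_of_mem ((hi a ha a' ha').1 hia)]
      · rw [inter_singleton_of_notMem hia,
          inter_singleton_of_notMem (mt (hi a ha a' ha').2 hia)]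
    · exact hAB b hb a ha a' ha'
  rw [card_insert_of_notMem hiB, mul_add_one, hmax] at hbound
  exact (card_pos.2 hA).ne' (by omega)

lemma two_mul_card_filter_mem_eq_of_card_mul_card_eq
    (hAB : ∀ b ∈ B, ∀ a ∈ A, ∀ a' ∈ A, #(a ∩ b) = #(a' ∩ b))
    (hmax : #A * #B = 2 ^ Fintype.card ι) (hB : B.Nonempty) {s t : Finset ι} {i : ι}
    (hs : s ∈ A) (ht : t ∈ A) (his : i ∈ s) (hit : i ∉ t) :
    2 * #{a ∈ A | i ∈ a} = #A := by
  have hA : #A = 2 ^ finrank ℚ (diffSpan ℚ A) := by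
    refine le_antisymm (card_le_two_pow_finrank_diffSpan A)
      (Nat.le_of_mul_le_mul_right ?_ (card_pos.2 hB))
    exact hmax ▸ two_pow_finrank_diffSpan_mul_card_le hAB
  have h₁ := two_mul_card_le_two_pow_finrank_diffSpan (K := ℚ) (S' := {a ∈ A | i ∈ a})
    (filter_subset _ _) (fun u hu v hv => iff_of_true (mem_filter.1 hu).2 (mem_filter.1 hv).2)
    hs ht his hit
  have h₀ := two_mul_card_le_two_pow_finrank_diffSpan (K := ℚ) (S' := {a ∈ A | i ∉ a})
    (filter_subset _ _) (fun u hu v hv => iff_of_false (mem_filter.1 hu).2 (mem_filter.1 hv).2)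
    hs ht his hit
  have := card_filter_add_card_filter_not (s := A) (fun a => i ∈ a)
  omega

end CrossIntersecting

lemma sum_card_inter_eq_sum_card_filter_mem {α : Type*} [DecidableEq α]
    (A : Finset (Finset α)) (b : Finset α) :
    ∑ a ∈ A, #(a ∩ b) = ∑ i ∈ b, #{a ∈ A | i ∈ a} := by
  simp only [card_filter, inter_comm _ b, ← filter_mem_eq_inter]
  exact sum_comm

lemma two_mul_card_inter_eq_card {α : Type*} [DecidableEq α] {A : Finset (Finset α)}
    {b : Finset α} {t : ℕ} (hA : A.Nonempty) (ht : ∀ a ∈ A, #(a ∩ b) = t)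
    (hhalf : ∀ i ∈ b, 2 * #{a ∈ A | i ∈ a} = #A) : 2 * t = #b := by
  have hsum := sum_card_inter_eq_sum_card_filter_mem A b
  rw [sum_congr rfl ht, sum_const, smul_eq_mul] at hsum
  have : #A * (2 * t) = #A * #b := by
    rw [mul_left_comm, hsum, mul_sum, sum_congr rfl hhalf, sum_const, smul_eq_mul, mul_comm]
  exact Nat.eq_of_mul_eq_mul_left (card_pos.2 hA) this

theorem maximal_pair_trivial_general (n c d : ℕ) (hc : 0 < c) (hcd : c < d)
    (hhalf : 2 * c ≠ d)
    (A B : Finset (Finset (Fin n)))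
    (hcross : ∀ a ∈ A, ∀ b ∈ B, d * (a ∩ b).card = c * b.card)
    (hmax : A.card * B.card = 2 ^ n) :
    A = Finset.univ ∧ ∀ b ∈ B, b = ∅ := by
  have hmax' : #A * #B = 2 ^ Fintype.card (Fin n) := by rw [hmax, Fintype.card_fin]
  obtain ⟨a₀, ha₀⟩ : A.Nonempty := card_pos.1 (Nat.pos_of_mul_pos_right (hmax ▸ Nat.two_pow_pos n))
  have hB : B.Nonempty := card_pos.1 (Nat.pos_of_mul_pos_left (hmax ▸ Nat.two_pow_pos n))
  have hAB : ∀ b ∈ B, ∀ a ∈ A, ∀ a' ∈ A, #(a ∩ b) = #(a' ∩ b) := fun b hb a ha a' ha' =>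
    Nat.eq_of_mul_eq_mul_left (hc.trans hcd) ((hcross a ha b hb).trans (hcross a' ha' b hb).symm)
  have hsplit : ∀ i, ∃ s ∈ A, ∃ t ∈ A, i ∈ s ∧ i ∉ t := by
    intro i
    by_contra! hi
    have hiB := singleton_mem_of_card_mul_card_eq hAB hmax' ⟨a₀, ha₀⟩
      fun a ha a' ha' => ⟨hi a ha a' ha', hi a' ha' a ha⟩
    have := hcross a₀ ha₀ {i} hiB
    by_cases hia : i ∈ a₀
    · rw [inter_singleton_of_mem hia, card_singleton] at this; omega
    · rw [inter_singleton_of_notMem hia, card_singleton, card_empty] at this; omega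
  have hempty : ∀ b ∈ B, b = ∅ := by
    intro b hb
    have h2t := two_mul_card_inter_eq_card ⟨a₀, ha₀⟩ (fun a ha => hAB b hb a ha a₀ ha₀)
      fun i _ => by
        obtain ⟨s, hs, t, ht, his, hit⟩ := hsplit i
        exact two_mul_card_filter_mem_eq_of_card_mul_card_eq hAB hmax' hB hs ht his hit
    have hdt : d * #(a₀ ∩ b) = 2 * c * #(a₀ ∩ b) := by
      rw [hcross a₀ ha₀ b hb, ← h2t, mul_left_comm, mul_assoc]
    have ht : #(a₀ ∩ b) = 0 := by
      by_contra ht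
      exact hhalf (Nat.eq_of_mul_eq_mul_right (Nat.pos_of_ne_zero ht) hdt).symm
    rw [← card_eq_zero, ← h2t, ht]
  have hB1 : #B = 1 :=
    le_antisymm (card_le_one.2 fun b hb b' hb' => by rw [hempty b hb, hempty b' hb']) (card_pos.2 hB)
  refine ⟨eq_univ_of_card _ ?_, hempty⟩
  rw [← mul_one #A, ← hB1, hmax, Fintype.card_finset, Fintype.card_fin]

theorem maximal_pair_trivial (n c d : ℕ) (hn : 0 < n) (hc : 0 < c) (hcd : c < d)
    (hcop : Nat.Coprime c d) (hhalf : 2 * c ≠ d)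
    (A B : Finset (Finset (Fin n)))
    (hcross : ∀ a ∈ A, ∀ b ∈ B, d * (a ∩ b).card = c * b.card)
    (hmax : A.card * B.card = 2 ^ n) :
    A = Finset.univ ∧ ∀ b ∈ B, b = ∅ :=
  maximal_pair_trivial_general n c d hc hcd hhalf A B hcross hmax
end

section
/- Let (A,B) be a maximal c/d-cross-intersecting pair (|A|·|B| = 2^n, 0 < c/d < 1 irreducible). Then for any B₁, B₂ ∈ B, we have |B₁ ∩ B₂| ≡ 0 (mod d). -/
/-!
Fix `a₀ ∈ A` and work in `𝔽₂ⁿ` with characteristic vectors. Since `d * |a ∩ b| = c * |b|`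
determines `|a ∩ b|` independently of `a ∈ A`, every `χ a - χ a₀` is orthogonal to every `χ b`,
so `A` embeds into `V^⊥` and `B` into `V = span χ(B)`. As `|V| * |V^⊥| = 2ⁿ = |A| * |B|`, the set
`χ(B)` is all of `V`, i.e. `B` is closed under symmetric difference. Applying
`|s ∆ t| + 2 |s ∩ t| = |s| + |t|` to `b₁, b₂` and to `a₀ ∩ b₁, a₀ ∩ b₂` then gives
`d * |a₀ ∩ b₁ ∩ b₂| = c * |b₁ ∩ b₂|`, and `c` is prime to `d`.
-/

open Finset Matrix Module
open scoped symmDiff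

theorem Finset.card_symmDiff_add_two_mul_card_inter {α : Type*} [DecidableEq α]
    (s t : Finset α) : #(s ∆ t) + 2 * #(s ∩ t) = #s + #t := by
  rw [symmDiff_eq_sup_sdiff_inf, sup_eq_union, inf_eq_inter,
    card_sdiff_of_subset inter_subset_union, ← card_union_add_card_inter]
  have := card_le_card (inter_subset_union (s := s) (t := t))
  omega

section Indicator
variable {α : Type*} [DecidableEq α]

theorem Finset.indicator_one_symmDiff_zmod_two (s t : Finset α) :
    ((s ∆ t : Finset α) : Set α).indicator (1 : α → ZMod 2) =
      (s : Set α).indicator 1 + (t : Set α).indicator 1 := by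
  ext i
  by_cases hs : i ∈ s <;> by_cases ht : i ∈ t <;> simp [hs, ht, Set.mem_symmDiff]
  decide

theorem Finset.indicator_one_dotProduct_indicator_one {R : Type*} [Semiring R] [Fintype α]
    (s t : Finset α) :
    (s : Set α).indicator (1 : α → R) ⬝ᵥ (t : Set α).indicator 1 = #(s ∩ t) := by
  have h (i : α) : (s : Set α).indicator (1 : α → R) i * (t : Set α).indicator 1 i =
      if i ∈ s ∩ t then 1 else 0 := by
    by_cases hs : i ∈ s <;> by_cases ht : i ∈ t <;> simp [hs, ht]
  simp only [dotProduct, h, sum_boole, filter_mem_eq_inter, univ_inter]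

end Indicator

section Orthogonal
variable {K ι : Type*} [Field K] [Fintype ι]

theorem mem_orthogonal_span_dotProductBilin {S : Set (ι → K)} {w : ι → K}
    (h : ∀ s ∈ S, s ⬝ᵥ w = 0) :
    w ∈ LinearMap.BilinForm.orthogonal (dotProductBilin K K) (Submodule.span K S) := by
  have : Submodule.span K S ≤ LinearMap.ker ((dotProductBilin K K).flip w) :=
    Submodule.span_le.2 h
  exact fun v hv => this hv

theorem natCard_mul_natCard_orthogonal_dotProductBilin (V : Submodule K (ι → K)) :
    Nat.card V * Nat.card (LinearMap.BilinForm.orthogonal (dotProductBilin K K) V) =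
      Nat.card (ι → K) := by
  have hker : LinearMap.ker (dotProductBilin K K : LinearMap.BilinForm K (ι → K)) = ⊥ :=
    LinearMap.ker_eq_bot'.2 fun v hv => dotProduct_eq_zero v fun w => LinearMap.congr_fun hv w
  have := LinearMap.BilinForm.finrank_add_finrank_orthogonal' (B := dotProductBilin K K) V
  rw [hker, inf_bot_eq, finrank_bot, add_zero] at this
  rw [natCard_eq_pow_finrank (K := K) (V := V), natCard_eq_pow_finrank (K := K) (V := ι → K),
    natCard_eq_pow_finrank (K := K) (V := LinearMap.BilinForm.orthogonal _ V), ← pow_add, this]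

theorem coe_eq_span_of_card_mul_card_eq [Finite K] {S T : Finset (ι → K)}
    (hT : ∀ s ∈ S, ∀ t ∈ T, ∀ t' ∈ T, s ⬝ᵥ t = s ⬝ᵥ t')
    (hcard : #S * #T = Nat.card (ι → K)) :
    (S : Set (ι → K)) = Submodule.span K (S : Set (ι → K)) := by
  set V := Submodule.span K (S : Set (ι → K))
  set W := LinearMap.BilinForm.orthogonal (dotProductBilin K K) V
  obtain ⟨t₀, ht₀⟩ : T.Nonempty := by
    rw [nonempty_iff_ne_empty]
    rintro rfl
    exact Nat.card_pos.ne (by simpa using hcard)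
  have hSV : #S ≤ Nat.card V := by
    rw [← Set.ncard_coe_finset, ← Nat.card_coe_set_eq]
    exact Set.ncard_le_ncard Submodule.subset_span (Set.toFinite _)
  have hTW : #T ≤ Nat.card W := by
    have hsub : (· - t₀) '' (T : Set (ι → K)) ⊆ W := by
      rintro _ ⟨t, ht, rfl⟩
      refine mem_orthogonal_span_dotProductBilin fun s hs => ?_
      simp [dotProduct_sub, hT s hs t ht t₀ ht₀]
    rw [← Set.ncard_coe_finset, ← Set.ncard_image_of_injective _ (sub_left_injective (b := t₀)),
      ← Nat.card_coe_set_eq]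
    exact Set.ncard_le_ncard hsub (Set.toFinite _)
  have hTpos : 0 < #T := card_pos.2 ⟨t₀, ht₀⟩
  have hVW := natCard_mul_natCard_orthogonal_dotProductBilin V
  have hVS : Nat.card V ≤ #S := by nlinarith
  refine Set.eq_of_subset_of_ncard_le Submodule.subset_span ?_ (Set.toFinite _)
  rwa [Set.ncard_coe_finset, ← Nat.card_coe_set_eq]

end Orthogonal

variable {α : Type*} [DecidableEq α]

def IsCrossIntersecting (c d : ℕ) (A B : Finset (Finset α)) : Prop :=
  ∀ a ∈ A, ∀ b ∈ B, d * #(a ∩ b) = c * #b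

namespace IsCrossIntersecting
variable {c d : ℕ} {A B : Finset (Finset α)} {a a' b b₁ b₂ : Finset α}

theorem card_inter_eq (h : IsCrossIntersecting c d A B) (hd : d ≠ 0) (ha : a ∈ A) (ha' : a' ∈ A)
    (hb : b ∈ B) : #(a ∩ b) = #(a' ∩ b) :=
  Nat.eq_of_mul_eq_mul_left (Nat.pos_of_ne_zero hd) ((h a ha b hb).trans (h a' ha' b hb).symm)

theorem symmDiff_mem [Fintype α] (h : IsCrossIntersecting c d A B) (hd : d ≠ 0)
    (hmax : #A * #B = 2 ^ Fintype.card α) (hb₁ : b₁ ∈ B) (hb₂ : b₂ ∈ B) : b₁ ∆ b₂ ∈ B := by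
  set χ : Finset α → α → ZMod 2 := fun s => (s : Set α).indicator 1
  have hχ : Function.Injective χ := fun s t hst => coe_injective (Set.indicator_one_inj _ hst)
  have hconst : ∀ s ∈ B.image χ, ∀ t ∈ A.image χ, ∀ t' ∈ A.image χ, s ⬝ᵥ t = s ⬝ᵥ t' := by
    simp only [mem_image]
    rintro _ ⟨b, hb, rfl⟩ _ ⟨a, ha, rfl⟩ _ ⟨a', ha', rfl⟩
    simp only [χ, indicator_one_dotProduct_indicator_one, inter_comm b,
      h.card_inter_eq hd ha ha' hb]
  have hcard : #(B.image χ) * #(A.image χ) = Nat.card (α → ZMod 2) := by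
    rw [card_image_of_injective _ hχ, card_image_of_injective _ hχ, mul_comm, hmax,
      Nat.card_fun, Nat.card_zmod, Nat.card_eq_fintype_card]
  have hspan := coe_eq_span_of_card_mul_card_eq hconst hcard
  have hsum : χ b₁ + χ b₂ ∈ (B.image χ : Set (α → ZMod 2)) := by
    rw [hspan]
    exact add_mem (Submodule.subset_span (mem_image_of_mem χ hb₁))
      (Submodule.subset_span (mem_image_of_mem χ hb₂))
  obtain ⟨b, hb, hbχ⟩ := mem_image.1 hsum
  rwa [← hχ (hbχ.trans (indicator_one_symmDiff_zmod_two b₁ b₂).symm)]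

theorem mul_card_inter_inter (h : IsCrossIntersecting c d A B) (ha : a ∈ A) (hb₁ : b₁ ∈ B)
    (hb₂ : b₂ ∈ B) (hb₁₂ : b₁ ∆ b₂ ∈ B) : d * #(a ∩ (b₁ ∩ b₂)) = c * #(b₁ ∩ b₂) := by
  have hB := card_symmDiff_add_two_mul_card_inter b₁ b₂
  have hAB := card_symmDiff_add_two_mul_card_inter (a ∩ b₁) (a ∩ b₂)
  have hdist : (a ∩ b₁) ∆ (a ∩ b₂) = a ∩ b₁ ∆ b₂ := (inf_symmDiff_distrib_left a b₁ b₂).symm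
  rw [hdist, ← inter_inter_distrib_left] at hAB
  have h₁ := h a ha b₁ hb₁
  have h₂ := h a ha b₂ hb₂
  have h₁₂ := h a ha _ hb₁₂
  have h2 : 2 * (d * #(a ∩ (b₁ ∩ b₂))) = 2 * (c * #(b₁ ∩ b₂)) := by
    linear_combination d * hAB - c * hB + h₁ + h₂ - h₁₂
  exact Nat.eq_of_mul_eq_mul_left two_pos h2

theorem dvd_card_inter (h : IsCrossIntersecting c d A B) (hcop : c.Coprime d) (hA : A.Nonempty)
    (hb₁ : b₁ ∈ B) (hb₂ : b₂ ∈ B) (hb₁₂ : b₁ ∆ b₂ ∈ B) : d ∣ #(b₁ ∩ b₂) := by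
  obtain ⟨a, ha⟩ := hA
  exact hcop.symm.dvd_of_dvd_mul_left ⟨_, (h.mul_card_inter_inter ha hb₁ hb₂ hb₁₂).symm⟩

end IsCrossIntersecting

theorem maximal_B_inter_div_general (n c d : ℕ) (hcd : c < d)
    (hcop : Nat.Coprime c d)
    (A B : Finset (Finset (Fin n)))
    (hcross : ∀ a ∈ A, ∀ b ∈ B, d * (a ∩ b).card = c * b.card)
    (hmax : A.card * B.card = 2 ^ n) :
    ∀ b₁ ∈ B, ∀ b₂ ∈ B, d ∣ (b₁ ∩ b₂).card := by
  intro b₁ hb₁ b₂ hb₂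
  have hA : A.Nonempty := card_pos.1 (Nat.pos_of_mul_pos_right (hmax ▸ Nat.two_pow_pos n))
  have hmax' : #A * #B = 2 ^ Fintype.card (Fin n) := by rwa [Fintype.card_fin]
  have h : IsCrossIntersecting c d A B := hcross
  exact h.dvd_card_inter hcop hA hb₁ hb₂ (h.symmDiff_mem (by omega) hmax' hb₁ hb₂)

theorem maximal_B_inter_div (n c d : ℕ) (hn : 0 < n) (hc : 0 < c) (hcd : c < d)
    (hcop : Nat.Coprime c d)
    (A B : Finset (Finset (Fin n)))
    (hcross : ∀ a ∈ A, ∀ b ∈ B, d * (a ∩ b).card = c * b.card)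
    (hmax : A.card * B.card = 2 ^ n) :
    ∀ b₁ ∈ B, ∀ b₂ ∈ B, d ∣ (b₁ ∩ b₂).card :=
  maximal_B_inter_div_general n c d hcd hcop A B hcross hmax
end
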